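/- (Lemma 6.) Let C ∈ ℝ^{m×m} be symmetric positive semidefinite with positive semidefinite square root S = √C, and define the block operator T_C : ℝ^{m×d} × ℝ^{m×d} → ℝ^{m×d} × ℝ^{m×d} by T_C(Z, W) = (Z − S W, S Z + (I − C) W). Then for all X = (X_u, X_ℓ) and Y = (Y_u, Y_ℓ) in ℝ^{m×d} × ℝ^{m×d}: ⟨(I−C)(Z_u), Z_u⟩_F + ‖Z_ℓ‖²_F = ‖U_u‖²_F + ⟨(I−C)(U_ℓ), U_ℓ⟩_F, where (Z_u, Z_ℓ) = T_C X − T_C Y and (U_u, U_ℓ) = X − Y. Equivalently, ‖T_C X − T_C Y‖²_{Λ_C} = ‖X − Y‖²_{V_C} with Λ_C = diag(I−C, I) and V_C = diag(I, I−C). -/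

import Mathlib

/-!
Because `S² = C`, the matrix `P = 1 - C = 1 - S²` is symmetric and commutes with `S`. As `T_C` is
linear, `T_C X - T_C Y = T_C (X - Y)`; expanding the quadratic form of `(A, B) = X - Y`, the cross
terms `± Bᵀ S P A` cancel since `S P = P S`, and the remaining ones collapse by `P + S² = 1` to
`Aᵀ A + Bᵀ P B`.
-/

open Matrix

/-- Squared Euclidean norm of a vector in ℝ^d. -/
noncomputable def vecNormSq {d : ℕ} (v : Fin d → ℝ) : ℝ := ∑ j, v j ^ 2

/-- The continuous linear map `u ↦ ⟨v, u⟩` on ℝ^d (used to state that `v` is a gradient). -/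
noncomputable def dotCLM {d : ℕ} (v : Fin d → ℝ) : (Fin d → ℝ) →L[ℝ] ℝ :=
  LinearMap.toContinuousLinearMap
    (∑ j, v j • (LinearMap.proj j : (Fin d → ℝ) →ₗ[ℝ] ℝ))

/-- Squared Frobenius norm. -/
noncomputable def frobSq {m d : ℕ} (X : Matrix (Fin m) (Fin d) ℝ) : ℝ :=
  ∑ i, ∑ j, X i j ^ 2

/-- Frobenius inner product `⟨X, Y⟩_F = trace(Xᵀ Y)`. -/
noncomputable def frobInner {m d : ℕ} (X Y : Matrix (Fin m) (Fin d) ℝ) : ℝ :=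
  ∑ i, ∑ j, X i j * Y i j

/-- All ones vector `1_m`. -/
def onesV (m : ℕ) : Fin m → ℝ := fun _ => 1

/-- The consensus matrix `1_m xᵀ` (all rows equal to `x`). -/
def consMat (m : ℕ) {d : ℕ} (x : Fin d → ℝ) : Matrix (Fin m) (Fin d) ℝ :=
  Matrix.of fun _ j => x j

/-- The matrix `∇f(X)` whose `i`-th row is `∇f_i(x_i)`. -/
noncomputable def gradMat {m d : ℕ} (gradf : Fin m → (Fin d → ℝ) → (Fin d → ℝ))
    (X : Matrix (Fin m) (Fin d) ℝ) : Matrix (Fin m) (Fin d) ℝ :=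
  Matrix.of fun i j => gradf i (X i) j

/-- `v` is a subgradient of the extended-valued convex function `G` at `x`. -/
def IsSubgradAt {d : ℕ} (G : (Fin d → ℝ) → EReal) (v x : Fin d → ℝ) : Prop :=
  ∀ u : Fin d → ℝ, G x + (((∑ j, v j * (u j - x j)) : ℝ) : EReal) ≤ G u

/-- Convexity for an extended-real-valued function. -/
def ERealConvexOn {d : ℕ} (G : (Fin d → ℝ) → EReal) : Prop :=
  ∀ x y : Fin d → ℝ, ∀ a b : ℝ, 0 ≤ a → 0 ≤ b → a + b = 1 →
    G (a • x + b • y) ≤ (a : EReal) * G x + (b : EReal) * G y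

/-- `G` is proper: never `⊥` and finite somewhere. -/
def GProper {d : ℕ} (G : (Fin d → ℝ) → EReal) : Prop :=
  (∀ x, G x ≠ ⊥) ∧ (∃ x, G x ≠ ⊤)

/-- `g(X) = Σ_i G(x_i)`. -/
noncomputable def gSum {m d : ℕ} (G : (Fin d → ℝ) → EReal)
    (X : Matrix (Fin m) (Fin d) ℝ) : EReal :=
  ∑ i, G (X i)

/-- Objective of the proximal subproblem `Y ↦ g(Y) + (1/(2γ))‖Y − Z‖²_F`. -/
noncomputable def proxObj {m d : ℕ} (G : (Fin d → ℝ) → EReal) (γ : ℝ)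
    (Z Y : Matrix (Fin m) (Fin d) ℝ) : EReal :=
  gSum G Y + (((1 / (2 * γ) * frobSq (Y - Z)) : ℝ) : EReal)

/-- `P` is the unique minimizer of the proximal subproblem, i.e. `P = prox_{γ g}(Z)`. -/
def IsProx {m d : ℕ} (G : (Fin d → ℝ) → EReal) (γ : ℝ)
    (Z P : Matrix (Fin m) (Fin d) ℝ) : Prop :=
  (∀ Y, proxObj G γ Z P ≤ proxObj G γ Z Y) ∧
  (∀ Y, (∀ Y', proxObj G γ Z Y ≤ proxObj G γ Z Y') → Y = P)

/-- Largest eigenvalue of a symmetric matrix, via the Rayleigh quotient. -/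
noncomputable def lamMax {m : ℕ} (P : Matrix (Fin m) (Fin m) ℝ) : ℝ :=
  sSup {r : ℝ | ∃ z : Fin m → ℝ, vecNormSq z = 1 ∧ r = z ⬝ᵥ (P *ᵥ z)}

/-- Smallest eigenvalue of a symmetric matrix, via the Rayleigh quotient. -/
noncomputable def lamMin {m : ℕ} (P : Matrix (Fin m) (Fin m) ℝ) : ℝ :=
  sInf {r : ℝ | ∃ z : Fin m → ℝ, vecNormSq z = 1 ∧ r = z ⬝ᵥ (P *ᵥ z)}

/-- Second-smallest eigenvalue `λ₂(C) = min{⟨z, Cz⟩ : ‖z‖ = 1, 1ᵀz = 0}`. -/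
noncomputable def lam2 {m : ℕ} (C : Matrix (Fin m) (Fin m) ℝ) : ℝ :=
  sInf {r : ℝ | ∃ z : Fin m → ℝ, vecNormSq z = 1 ∧ (∑ i, z i) = 0 ∧ r = z ⬝ᵥ (C *ᵥ z)}

open scoped ComplexOrder in
/-- The positive semidefinite square root, as `Matrix.PosSemidef.sqrt` was defined in Mathlib
of December 2024 (removed since). -/
noncomputable def Matrix.PosSemidef.sqrt {n 𝕜 : Type*} [Fintype n] [RCLike 𝕜] [DecidableEq n]
    {A : Matrix n n 𝕜} (hA : A.PosSemidef) : Matrix n n 𝕜 :=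
  hA.1.eigenvectorUnitary.1 * diagonal ((RCLike.ofReal : ℝ → 𝕜) ∘ (fun i => Real.sqrt (hA.1.eigenvalues i))) *
    (star hA.1.eigenvectorUnitary : Matrix n n 𝕜)


namespace Matrix.PosSemidef

open scoped ComplexOrder

variable {n 𝕜 : Type*} [Fintype n] [RCLike 𝕜] [DecidableEq n] {A : Matrix n n 𝕜}

theorem isHermitian_sqrt (hA : A.PosSemidef) : hA.sqrt.IsHermitian :=
  isHermitian_mul_mul_conjTranspose _ <| isHermitian_diagonal_of_self_adjoint _ <|
    funext fun _ => RCLike.conj_ofReal _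

theorem sqrt_mul_self (hA : A.PosSemidef) : hA.sqrt * hA.sqrt = A := by
  have hU : star hA.1.eigenvectorUnitary.1 * hA.1.eigenvectorUnitary.1 = 1 :=
    Unitary.star_mul_self_of_mem hA.1.eigenvectorUnitary.2
  have hD : diagonal ((RCLike.ofReal : ℝ → 𝕜) ∘ fun i => √(hA.1.eigenvalues i)) *
      diagonal ((RCLike.ofReal : ℝ → 𝕜) ∘ fun i => √(hA.1.eigenvalues i)) =
      diagonal (RCLike.ofReal ∘ hA.1.eigenvalues) := by
    rw [diagonal_mul_diagonal]
    congr 1 with i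
    simp [← RCLike.ofReal_mul, Real.mul_self_sqrt (hA.eigenvalues_nonneg i)]
  conv_rhs => rw [hA.1.spectral_theorem, Unitary.conjStarAlgAut_apply]
  simp only [sqrt, Matrix.mul_assoc]
  rw [← Matrix.mul_assoc (star _) hA.1.eigenvectorUnitary.1, hU, Matrix.one_mul,
    ← Matrix.mul_assoc (diagonal _), hD]

end Matrix.PosSemidef

/-- With `T = [[1, -S], [S, P]]` this is `Tᵀ diag(P, 1) T = diag(1, P)` applied to `(A, B)`. -/
theorem isometry_identity_of_add_mul_self_eq_one {R m n : Type*} [CommRing R] [Fintype m]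
    [DecidableEq m] {S P : Matrix m m R} (hS : Sᵀ = S) (hsum : P + S * S = 1)
    (A B : Matrix m n R) :
    (P * (A - S * B))ᵀ * (A - S * B) + (S * A + P * B)ᵀ * (S * A + P * B)
      = Aᵀ * A + (P * B)ᵀ * B := by
  have hP : P = 1 - S * S := eq_sub_of_add_eq hsum
  have hPt : Pᵀ = P := by rw [hP, transpose_sub, transpose_one, transpose_mul, hS]
  have hSP (X : Matrix m n R) : S * (P * X) = P * (S * X) := by
    simp only [hP, Matrix.sub_mul, Matrix.mul_sub, Matrix.one_mul, Matrix.mul_assoc]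
  calc _ = Aᵀ * ((P + S * S) * A) + Bᵀ * (P * ((P + S * S) * B)) := by
        simp only [transpose_sub, transpose_add, transpose_mul, hS, hPt, Matrix.mul_sub,
          Matrix.sub_mul, Matrix.mul_add, Matrix.add_mul, Matrix.mul_assoc, hSP]
        abel
    _ = _ := by rw [hsum, Matrix.one_mul, Matrix.one_mul, transpose_mul, hPt, Matrix.mul_assoc]

theorem frobInner_eq_trace {m d : ℕ} (X Y : Matrix (Fin m) (Fin d) ℝ) :
    frobInner X Y = trace (Xᵀ * Y) := by
  simp only [frobInner, trace, diag, mul_apply, transpose_apply]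
  exact Finset.sum_comm

theorem frobSq_eq_frobInner {m d : ℕ} (X : Matrix (Fin m) (Fin d) ℝ) :
    frobSq X = frobInner X X := by
  simp only [frobSq, frobInner, sq]

theorem frobInner_add_frobSq_eq {m d : ℕ} {S P : Matrix (Fin m) (Fin m) ℝ}
    (hS : Sᵀ = S) (hsum : P + S * S = 1) (A B : Matrix (Fin m) (Fin d) ℝ) :
    frobInner (P * (A - S * B)) (A - S * B) + frobSq (S * A + P * B)
      = frobSq A + frobInner (P * B) B := by
  simp only [frobSq_eq_frobInner, frobInner_eq_trace, ← trace_add,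
    isometry_identity_of_add_mul_self_eq_one hS hsum]

/-- Lemma 6: isometry-type identity for the communication operator `T_C`. -/
theorem stmt_8 {m d : ℕ} (C : Matrix (Fin m) (Fin m) ℝ) (hC : C.PosSemidef)
    (Xu Xl Yu Yl : Matrix (Fin m) (Fin d) ℝ) :
    frobInner ((1 - C) * ((Xu - hC.sqrt * Xl) - (Yu - hC.sqrt * Yl)))
        ((Xu - hC.sqrt * Xl) - (Yu - hC.sqrt * Yl))
      + frobSq ((hC.sqrt * Xu + (1 - C) * Xl) - (hC.sqrt * Yu + (1 - C) * Yl))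
    = frobSq (Xu - Yu) + frobInner ((1 - C) * (Xl - Yl)) (Xl - Yl) := by
  have hZu : (Xu - hC.sqrt * Xl) - (Yu - hC.sqrt * Yl) = (Xu - Yu) - hC.sqrt * (Xl - Yl) := by
    rw [Matrix.mul_sub]; abel
  have hZl : (hC.sqrt * Xu + (1 - C) * Xl) - (hC.sqrt * Yu + (1 - C) * Yl)
      = hC.sqrt * (Xu - Yu) + (1 - C) * (Xl - Yl) := by
    rw [Matrix.mul_sub, Matrix.mul_sub]; abel
  rw [hZu, hZl]
  exact frobInner_add_frobSq_eq (isHermitian_iff_isSymm.mp hC.isHermitian_sqrt)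
    (by rw [hC.sqrt_mul_self, sub_add_cancel]) _ _
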